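/- Perfect parallel repetition for SepQMA: suppose C₁ ∈ Sep(X₁,…,X_m) and C₂ ∈ Sep(Y₁,…,Y_m) are positive semidefinite with C₁ ⪯ 1 and C₂ ⪯ 1. Let v₁ = max{⟨ρ,C₁⟩ : ρ ∈ Sep(X₁,…,X_m), Tr ρ = 1} and v₂ defined analogously for C₂. Then max{⟨ρ, C₁⊗C₂⟩ : ρ ∈ Sep(X₁⊗Y₁,…,X_m⊗Y_m), Tr ρ = 1} = v₁·v₂. -/

import Mathlib

/-!
The product ρ₁ ⊗ ρ₂ of optimal separable states is separable across the pairs `Xⱼ ⊗ Yⱼ` and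
attains `v₁ v₂`. Conversely, view a separable state `ρ` on `⨂ⱼ (Xⱼ ⊗ Yⱼ)` as an operator on
`(⨂ⱼ Xⱼ) ⊗ (⨂ⱼ Yⱼ)`. Then `⟨ρ, C₁ ⊗ C₂⟩ = ⟨σ, C₁⟩` for `σ = Tr_Y [ρ (1 ⊗ C₂)]`, and `σ` is
separable across the `Xⱼ` because both `ρ` and `C₂` are. By homogeneity `⟨S, C₁⟩ ≤ v₁ Tr S` on
the whole separable cone, and `Tr σ = ⟨Tr_X ρ, C₂⟩ ≤ v₂` since `Tr_X ρ` is a separable state.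
-/

open scoped Kronecker ComplexOrder

/-- Trace norm of a complex matrix: `Tr √(Aᴴ A)`. -/
noncomputable def traceNorm {n : Type*} [Fintype n] [DecidableEq n] (A : Matrix n n ℂ) : ℝ :=
  ((Matrix.posSemidef_conjTranspose_mul_self A).1.eigenvectorUnitary.1 *
    Matrix.diagonal (((↑) : ℝ → ℂ) ∘ (√·) ∘ (Matrix.posSemidef_conjTranspose_mul_self A).1.eigenvalues) *
    (star (Matrix.posSemidef_conjTranspose_mul_self A).1.eigenvectorUnitary : Matrix n n ℂ)).trace.re

/-- Spectral (operator) norm of a complex matrix. -/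
noncomputable def opNorm {n : Type*} [Fintype n] [DecidableEq n] (A : Matrix n n ℂ) : ℝ :=
  ‖Matrix.toEuclideanCLM (𝕜 := ℂ) A‖

/-- Tensor product of a family of `m` matrices, as a matrix on the product index. -/
noncomputable def famTensor {m : ℕ} {ι : Fin m → Type*} [∀ j, Fintype (ι j)]
    (M : ∀ j, Matrix (ι j) (ι j) ℂ) : Matrix (∀ j, ι j) (∀ j, ι j) ℂ :=
  fun x y => ∏ j, M j (x j) (y j)

/-- Full separability across the partition `ι 1, …, ι m`. -/
def IsFullySep {m : ℕ} {ι : Fin m → Type*} [∀ j, Fintype (ι j)]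
    (A : Matrix (∀ j, ι j) (∀ j, ι j) ℂ) : Prop :=
  ∃ (k : ℕ) (P : Fin k → ∀ j, Matrix (ι j) (ι j) ℂ),
    (∀ i j, (P i j).PosSemidef) ∧ A = ∑ i, famTensor (P i)

/-- Membership in the dual cone of the fully separable operators. -/
def InSepDual {m : ℕ} {ι : Fin m → Type*} [∀ j, Fintype (ι j)]
    (W : Matrix (∀ j, ι j) (∀ j, ι j) ℂ) : Prop :=
  ∀ S : Matrix (∀ j, ι j) (∀ j, ι j) ℂ, IsFullySep S → 0 ≤ ((S * W).trace).re

/-- Partial trace over the second tensor factor. -/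
noncomputable def ptraceY {ι κ : Type*} [Fintype κ] (M : Matrix (ι × κ) (ι × κ) ℂ) :
    Matrix ι ι ℂ :=
  fun i i' => ∑ k, M (i, k) (i', k)

/-- The natural identification `⨂ⱼ (Xⱼ ⊗ Yⱼ) ≃ (⨂ⱼ Xⱼ) ⊗ (⨂ⱼ Yⱼ)` on index sets. -/
def piProd {m : ℕ} (ι κ : Fin m → Type*) : (∀ j, ι j × κ j) ≃ (∀ j, ι j) × (∀ j, κ j) where
  toFun f := (fun j => (f j).1, fun j => (f j).2)
  invFun p := fun j => (p.1 j, p.2 j)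
  left_inv _ := rfl
  right_inv _ := rfl

open Matrix

def sepValues {m : ℕ} {ι : Fin m → Type*} [∀ j, Fintype (ι j)]
    (C : Matrix (∀ j, ι j) (∀ j, ι j) ℂ) : Set ℝ :=
  {x | ∃ ρ : Matrix (∀ j, ι j) (∀ j, ι j) ℂ, IsFullySep ρ ∧ ρ.trace = 1 ∧ x = ((ρ * C).trace).re}

noncomputable def ptraceX {ι κ : Type*} [Fintype ι] (M : Matrix (ι × κ) (ι × κ) ℂ) :
    Matrix κ κ ℂ :=
  fun k k' => ∑ i, M (i, k) (i, k')

namespace Matrix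

variable {l m n p q R : Type*}

open scoped MatrixOrder in
lemma PosSemidef.trace_mul_nonneg {𝕜 : Type*} [RCLike 𝕜] [Fintype n] {A B : Matrix n n 𝕜}
    (hA : A.PosSemidef) (hB : B.PosSemidef) : 0 ≤ (A * B).trace := by
  classical
  obtain ⟨S, rfl⟩ := CStarAlgebra.nonneg_iff_eq_star_mul_self.mp hB.nonneg
  rw [← Matrix.mul_assoc, trace_mul_comm, ← Matrix.mul_assoc, star_eq_conjTranspose]
  exact (hA.mul_mul_conjTranspose_same S).trace_nonneg

lemma trace_reindex [AddCommMonoid R] [Fintype n] [Fintype p] (e : n ≃ p) (A : Matrix n n R) :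
    (reindex e e A).trace = A.trace :=
  e.symm.sum_comp fun i => A i i

lemma trace_reindex_mul_reindex [NonUnitalNonAssocSemiring R] [Fintype n] [Fintype p]
    (e : n ≃ p) (A B : Matrix n n R) : (reindex e e A * reindex e e B).trace = (A * B).trace := by
  rw [reindex_apply, reindex_apply, submatrix_mul_equiv, ← reindex_apply, trace_reindex]

lemma reindex_sum [AddCommMonoid R] {α : Type*} (s : Finset α) (e₁ : l ≃ n) (e₂ : m ≃ p)
    (f : α → Matrix l m R) : reindex e₁ e₂ (∑ i ∈ s, f i) = ∑ i ∈ s, reindex e₁ e₂ (f i) := by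
  ext; simp [Matrix.sum_apply]

lemma kronecker_sum [NonUnitalNonAssocSemiring R] {α : Type*} (s : Finset α) (A : Matrix l m R)
    (f : α → Matrix n p R) : A ⊗ₖ (∑ i ∈ s, f i) = ∑ i ∈ s, A ⊗ₖ f i := by
  ext; simp [Matrix.sum_apply, Finset.mul_sum]

lemma sum_kronecker [NonUnitalNonAssocSemiring R] {α : Type*} (s : Finset α)
    (f : α → Matrix l m R) (B : Matrix n p R) : (∑ i ∈ s, f i) ⊗ₖ B = ∑ i ∈ s, f i ⊗ₖ B := by
  ext; simp [Matrix.sum_apply, Finset.sum_mul]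

end Matrix

section PartialTrace

variable {a b : Type*} [Fintype a] [Fintype b]

omit [Fintype a] in
lemma ptraceY_sum {α : Type*} (s : Finset α) (f : α → Matrix (a × b) (a × b) ℂ) :
    ptraceY (∑ i ∈ s, f i) = ∑ i ∈ s, ptraceY (f i) := by
  ext; simp only [ptraceY, Matrix.sum_apply]; exact Finset.sum_comm

omit [Fintype b] in
lemma ptraceX_sum {α : Type*} (s : Finset α) (f : α → Matrix (a × b) (a × b) ℂ) :
    ptraceX (∑ i ∈ s, f i) = ∑ i ∈ s, ptraceX (f i) := by
  ext; simp only [ptraceX, Matrix.sum_apply]; exact Finset.sum_comm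

lemma trace_ptraceY (M : Matrix (a × b) (a × b) ℂ) : (ptraceY M).trace = M.trace := by
  simp [trace, ptraceY, Fintype.sum_prod_type]

lemma trace_ptraceX (M : Matrix (a × b) (a × b) ℂ) : (ptraceX M).trace = M.trace := by
  simp [trace, ptraceX, Fintype.sum_prod_type, Finset.sum_comm (γ := b)]

lemma mul_one_kronecker_apply [DecidableEq a] (M : Matrix (a × b) (a × b) ℂ) (N : Matrix b b ℂ)
    (i i' : a) (k k' : b) :
    (M * (1 ⊗ₖ N) : Matrix (a × b) (a × b) ℂ) (i, k) (i', k') = ∑ l, M (i, k) (i', l) * N l k' := by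
  simp [mul_apply, Fintype.sum_prod_type, one_apply]

lemma one_kronecker_mul_apply [DecidableEq a] (M : Matrix (a × b) (a × b) ℂ) (N : Matrix b b ℂ)
    (i i' : a) (k k' : b) :
    ((1 ⊗ₖ N) * M : Matrix (a × b) (a × b) ℂ) (i, k) (i', k') = ∑ l, N k l * M (i, l) (i', k') := by
  simp [mul_apply, Fintype.sum_prod_type, one_apply]

lemma trace_mul_kronecker [DecidableEq a] (M : Matrix (a × b) (a × b) ℂ) (A : Matrix a a ℂ)
    (B : Matrix b b ℂ) : (M * (A ⊗ₖ B)).trace = (ptraceY (M * (1 ⊗ₖ B)) * A).trace := by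
  simp only [trace, diag, mul_apply, Fintype.sum_prod_type, kroneckerMap_apply]
  simp only [ptraceY, mul_one_kronecker_apply, Finset.sum_mul]
  refine Finset.sum_congr rfl fun _ _ => Finset.sum_comm.trans ?_
  exact Finset.sum_congr rfl fun _ _ => Finset.sum_congr rfl fun _ _ =>
    Finset.sum_congr rfl fun _ _ => by ring

lemma trace_mul_one_kronecker [DecidableEq a] (M : Matrix (a × b) (a × b) ℂ) (B : Matrix b b ℂ) :
    (M * (1 ⊗ₖ B)).trace = (ptraceX M * B).trace := by
  simp only [trace, diag, Fintype.sum_prod_type, mul_one_kronecker_apply]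
  simp only [mul_apply, ptraceX, Finset.sum_mul]
  exact Finset.sum_comm.trans (Finset.sum_congr rfl fun _ _ => Finset.sum_comm)

lemma ptraceY_mul_one_kronecker_comm [DecidableEq a] (M : Matrix (a × b) (a × b) ℂ)
    (N : Matrix b b ℂ) : ptraceY (M * (1 ⊗ₖ N)) = ptraceY ((1 ⊗ₖ N) * M) := by
  ext i i'
  simp only [ptraceY, mul_one_kronecker_apply, one_kronecker_mul_apply]
  rw [Finset.sum_comm]
  simp only [mul_comm]

omit [Fintype a] in
lemma ptraceY_eq_sum_submatrix (M : Matrix (a × b) (a × b) ℂ) :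
    ptraceY M = ∑ k, M.submatrix (·, k) (·, k) := by
  ext; simp [ptraceY, Matrix.sum_apply]

omit [Fintype b] in
lemma ptraceX_eq_sum_submatrix (M : Matrix (a × b) (a × b) ℂ) :
    ptraceX M = ∑ i, M.submatrix (i, ·) (i, ·) := by
  ext; simp [ptraceX, Matrix.sum_apply]

omit [Fintype a] in
lemma posSemidef_ptraceY {M : Matrix (a × b) (a × b) ℂ} (hM : M.PosSemidef) :
    (ptraceY M).PosSemidef := by
  rw [ptraceY_eq_sum_submatrix]
  exact posSemidef_sum _ fun k _ => hM.submatrix _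

omit [Fintype b] in
lemma posSemidef_ptraceX {M : Matrix (a × b) (a × b) ℂ} (hM : M.PosSemidef) :
    (ptraceX M).PosSemidef := by
  rw [ptraceX_eq_sum_submatrix]
  exact posSemidef_sum _ fun i _ => hM.submatrix _

open scoped MatrixOrder in
lemma posSemidef_ptraceY_mul_one_kronecker [DecidableEq a] {M : Matrix (a × b) (a × b) ℂ}
    {N : Matrix b b ℂ} (hM : M.PosSemidef) (hN : N.PosSemidef) :
    (ptraceY (M * (1 ⊗ₖ N))).PosSemidef := by
  classical
  obtain ⟨S, rfl⟩ := CStarAlgebra.nonneg_iff_eq_star_mul_self.mp hN.nonneg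
  have h : M * (1 ⊗ₖ (star S * S)) = M * (1 ⊗ₖ S)ᴴ * (1 ⊗ₖ S) := by
    rw [conjTranspose_kronecker, conjTranspose_one, Matrix.mul_assoc, ← mul_kronecker_mul,
      one_mul, star_eq_conjTranspose]
  rw [h, ptraceY_mul_one_kronecker_comm, ← Matrix.mul_assoc]
  exact posSemidef_ptraceY (hM.mul_mul_conjTranspose_same _)

end PartialTrace

section FamTensor

variable {m : ℕ} {ι κ : Fin m → Type*} [∀ j, Fintype (ι j)] [∀ j, Fintype (κ j)]

lemma famTensor_mul (P Q : ∀ j, Matrix (ι j) (ι j) ℂ) :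
    famTensor P * famTensor Q = famTensor fun j => P j * Q j := by
  ext x y
  simp only [mul_apply, famTensor, Fintype.prod_sum (f := fun j t => P j (x j) t * Q j t (y j))]
  exact Finset.sum_congr rfl fun z _ => Finset.prod_mul_distrib.symm

lemma famTensor_conjTranspose (P : ∀ j, Matrix (ι j) (ι j) ℂ) :
    (famTensor P)ᴴ = famTensor fun j => (P j)ᴴ := by
  ext x y
  simp [famTensor, conjTranspose_apply]

lemma famTensor_smul (c : Fin m → ℂ) (P : ∀ j, Matrix (ι j) (ι j) ℂ) :
    (famTensor fun j => c j • P j) = (∏ j, c j) • famTensor P := by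
  ext x y
  simp [famTensor, Finset.prod_mul_distrib]

lemma trace_famTensor (P : ∀ j, Matrix (ι j) (ι j) ℂ) :
    (famTensor P).trace = ∏ j, (P j).trace := by
  simp only [trace, diag, famTensor, Fintype.prod_sum (f := fun j t => P j t t)]

lemma famTensor_eq_zero {P : ∀ j, Matrix (ι j) (ι j) ℂ} {j : Fin m} (hj : P j = 0) :
    famTensor P = 0 := by
  ext x y
  exact Finset.prod_eq_zero (Finset.mem_univ j) (by simp [hj])

open scoped MatrixOrder in
lemma posSemidef_famTensor {P : ∀ j, Matrix (ι j) (ι j) ℂ} (hP : ∀ j, (P j).PosSemidef) :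
    (famTensor P).PosSemidef := by
  classical
  choose S hS using fun j => CStarAlgebra.nonneg_iff_eq_star_mul_self.mp (hP j).nonneg
  have h : famTensor P = (famTensor S)ᴴ * famTensor S := by
    rw [famTensor_conjTranspose, famTensor_mul]
    exact congrArg famTensor (funext hS)
  rw [h]
  exact posSemidef_conjTranspose_mul_self _

lemma reindex_piProd_symm_kronecker_famTensor (A : ∀ j, Matrix (ι j) (ι j) ℂ)
    (B : ∀ j, Matrix (κ j) (κ j) ℂ) :
    reindex (piProd ι κ).symm (piProd ι κ).symm (famTensor A ⊗ₖ famTensor B) =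
      famTensor fun j => A j ⊗ₖ B j := by
  ext x y
  simp [famTensor, piProd, Finset.prod_mul_distrib]

lemma ptraceY_reindex_piProd_famTensor_mul [DecidableEq (∀ j, ι j)] [∀ j, DecidableEq (ι j)]
    (P : ∀ j, Matrix (ι j × κ j) (ι j × κ j) ℂ) (Q : ∀ j, Matrix (κ j) (κ j) ℂ) :
    ptraceY (reindex (piProd ι κ) (piProd ι κ) (famTensor P) * (1 ⊗ₖ famTensor Q)) =
      famTensor fun j => ptraceY (P j * (1 ⊗ₖ Q j)) := by
  ext x y
  simp only [ptraceY, mul_one_kronecker_apply, famTensor]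
  simp_rw [Fintype.prod_sum, Finset.prod_mul_distrib]
  rfl

lemma ptraceX_reindex_piProd_famTensor (P : ∀ j, Matrix (ι j × κ j) (ι j × κ j) ℂ) :
    ptraceX (reindex (piProd ι κ) (piProd ι κ) (famTensor P)) =
      famTensor fun j => ptraceX (P j) := by
  ext x y
  simp only [ptraceX, famTensor, Fintype.prod_sum]
  rfl

end FamTensor

section FullySep

variable {m : ℕ} {ι κ : Fin m → Type*} [∀ j, Fintype (ι j)] [∀ j, Fintype (κ j)]

lemma isFullySep_famTensor {P : ∀ j, Matrix (ι j) (ι j) ℂ} (hP : ∀ j, (P j).PosSemidef) :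
    IsFullySep (famTensor P) :=
  ⟨1, fun _ => P, fun _ => hP, by simp⟩

lemma isFullySep_zero : IsFullySep (0 : Matrix (∀ j, ι j) (∀ j, ι j) ℂ) :=
  ⟨0, Fin.elim0, fun i => i.elim0, by simp⟩

lemma IsFullySep.add {A B : Matrix (∀ j, ι j) (∀ j, ι j) ℂ} (hA : IsFullySep A)
    (hB : IsFullySep B) : IsFullySep (A + B) := by
  obtain ⟨k, P, hP, rfl⟩ := hA
  obtain ⟨k', Q, hQ, rfl⟩ := hB
  refine ⟨k + k', Fin.append P Q, Fin.addCases (by simpa using hP) (by simpa using hQ), ?_⟩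
  simp [Fin.sum_univ_add]

lemma isFullySep_sum {α : Type*} (s : Finset α) {f : α → Matrix (∀ j, ι j) (∀ j, ι j) ℂ}
    (h : ∀ i ∈ s, IsFullySep (f i)) : IsFullySep (∑ i ∈ s, f i) :=
  Finset.sum_induction f IsFullySep (fun _ _ => IsFullySep.add) isFullySep_zero h

lemma IsFullySep.posSemidef {A : Matrix (∀ j, ι j) (∀ j, ι j) ℂ} (hA : IsFullySep A) :
    A.PosSemidef := by
  obtain ⟨k, P, hP, rfl⟩ := hA
  exact posSemidef_sum _ fun i _ => posSemidef_famTensor (hP i)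

lemma IsFullySep.reindex_piProd_symm_kronecker {A : Matrix (∀ j, ι j) (∀ j, ι j) ℂ}
    {B : Matrix (∀ j, κ j) (∀ j, κ j) ℂ} (hA : IsFullySep A) (hB : IsFullySep B) :
    IsFullySep (reindex (piProd ι κ).symm (piProd ι κ).symm (A ⊗ₖ B)) := by
  obtain ⟨k, P, hP, rfl⟩ := hA
  obtain ⟨k', Q, hQ, rfl⟩ := hB
  simp only [sum_kronecker, kronecker_sum, reindex_sum, reindex_piProd_symm_kronecker_famTensor]
  exact isFullySep_sum _ fun l _ => isFullySep_sum _ fun i _ =>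
    isFullySep_famTensor fun j => (hP i j).kronecker (hQ l j)

lemma IsFullySep.ptraceY_reindex_piProd_mul_one_kronecker [DecidableEq (∀ j, ι j)]
    {ρ : Matrix (∀ j, ι j × κ j) (∀ j, ι j × κ j) ℂ} {N : Matrix (∀ j, κ j) (∀ j, κ j) ℂ}
    (hρ : IsFullySep ρ) (hN : IsFullySep N) :
    IsFullySep (ptraceY (reindex (piProd ι κ) (piProd ι κ) ρ * (1 ⊗ₖ N))) := by
  classical
  obtain ⟨k, P, hP, rfl⟩ := hρ
  obtain ⟨k', Q, hQ, rfl⟩ := hN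
  simp only [reindex_sum, kronecker_sum, Finset.sum_mul, Finset.mul_sum, ptraceY_sum,
    ptraceY_reindex_piProd_famTensor_mul]
  exact isFullySep_sum _ fun l _ => isFullySep_sum _ fun i _ =>
    isFullySep_famTensor fun j => posSemidef_ptraceY_mul_one_kronecker (hP i j) (hQ l j)

lemma IsFullySep.ptraceX_reindex_piProd {ρ : Matrix (∀ j, ι j × κ j) (∀ j, ι j × κ j) ℂ}
    (hρ : IsFullySep ρ) : IsFullySep (ptraceX (reindex (piProd ι κ) (piProd ι κ) ρ)) := by
  obtain ⟨k, P, hP, rfl⟩ := hρ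
  simp only [reindex_sum, ptraceX_sum, ptraceX_reindex_piProd_famTensor]
  exact isFullySep_sum _ fun i _ => isFullySep_famTensor fun j => posSemidef_ptraceX (hP i j)

end FullySep

section Value

variable {m : ℕ} {ι : Fin m → Type*} [∀ j, Fintype (ι j)]

lemma re_trace_famTensor_mul_le {C : Matrix (∀ j, ι j) (∀ j, ι j) ℂ} {v : ℝ}
    (hv : v ∈ upperBounds (sepValues C)) {F : ∀ j, Matrix (ι j) (ι j) ℂ}
    (hF : ∀ j, (F j).PosSemidef) :
    ((famTensor F * C).trace).re ≤ v * ((famTensor F).trace).re := by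
  by_cases hT0 : (famTensor F).trace = 0
  · obtain ⟨j, -, hj⟩ := Finset.prod_eq_zero_iff.mp (trace_famTensor F ▸ hT0)
    simp [famTensor_eq_zero ((hF j).trace_eq_zero_iff.mp hj)]
  have hT : (famTensor F).trace = (((famTensor F).trace).re : ℂ) :=
    Complex.eq_re_of_ofReal_le (posSemidef_famTensor hF).trace_nonneg
  have hT_pos : 0 < ((famTensor F).trace).re :=
    (Complex.nonneg_iff.mp (posSemidef_famTensor hF).trace_nonneg).1.lt_of_ne
      fun h => hT0 (by rw [hT, ← h, Complex.ofReal_zero])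
  -- normalise factorwise: for `m = 0` the separable cone is `ℕ • 1`, not closed under `ℝ≥0 • ·`
  have hnorm : (famTensor fun j => (F j).trace⁻¹ • F j) = (famTensor F).trace⁻¹ • famTensor F := by
    rw [famTensor_smul, Finset.prod_inv_distrib, ← trace_famTensor]
  have hsep : IsFullySep ((famTensor F).trace⁻¹ • famTensor F) :=
    hnorm ▸ isFullySep_famTensor fun j => (hF j).smul (inv_nonneg_of_nonneg (hF j).trace_nonneg)
  have htr : ((famTensor F).trace⁻¹ • famTensor F).trace = 1 := by
    rw [trace_smul, smul_eq_mul, inv_mul_cancel₀ hT0]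
  have hle := hv ⟨_, hsep, htr, rfl⟩
  rw [smul_mul_assoc, trace_smul, smul_eq_mul, hT, ← Complex.ofReal_inv,
    Complex.re_ofReal_mul] at hle
  rw [mul_comm v]
  exact (inv_mul_le_iff₀ hT_pos).mp hle

lemma IsFullySep.re_trace_mul_le {C S : Matrix (∀ j, ι j) (∀ j, ι j) ℂ} {v : ℝ}
    (hv : v ∈ upperBounds (sepValues C)) (hS : IsFullySep S) :
    ((S * C).trace).re ≤ v * (S.trace).re := by
  obtain ⟨k, P, hP, rfl⟩ := hS
  simp only [Finset.sum_mul, trace_sum, Complex.re_sum, Finset.mul_sum]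
  exact Finset.sum_le_sum fun i _ => re_trace_famTensor_mul_le hv (hP i)

end Value

lemma re_trace_mul_reindex_kronecker_le {m : ℕ} {ι κ : Fin m → Type*} [∀ j, Fintype (ι j)]
    [∀ j, Fintype (κ j)] {ρ : Matrix (∀ j, ι j × κ j) (∀ j, ι j × κ j) ℂ} (hρ : IsFullySep ρ)
    (hρtr : ρ.trace = 1) {C₁ : Matrix (∀ j, ι j) (∀ j, ι j) ℂ}
    {C₂ : Matrix (∀ j, κ j) (∀ j, κ j) ℂ} (hC₂ : IsFullySep C₂) {v₁ v₂ : ℝ}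
    (hv₁ : v₁ ∈ upperBounds (sepValues C₁)) (hv₁0 : 0 ≤ v₁)
    (hv₂ : v₂ ∈ upperBounds (sepValues C₂)) :
    ((ρ * reindex (piProd ι κ).symm (piProd ι κ).symm (C₁ ⊗ₖ C₂)).trace).re ≤ v₁ * v₂ := by
  classical
  set ρ' := reindex (piProd ι κ) (piProd ι κ) ρ
  have hρ' : ρ = reindex (piProd ι κ).symm (piProd ι κ).symm ρ' := by simp [ρ']
  have hτ : IsFullySep (ptraceX ρ') := hρ.ptraceX_reindex_piProd
  have hτtr : (ptraceX ρ').trace = 1 := by rw [trace_ptraceX, trace_reindex, hρtr]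
  calc ((ρ * reindex _ _ (C₁ ⊗ₖ C₂)).trace).re
      = ((ptraceY (ρ' * (1 ⊗ₖ C₂)) * C₁).trace).re := by
        rw [hρ', trace_reindex_mul_reindex, trace_mul_kronecker]
    _ ≤ v₁ * ((ptraceY (ρ' * (1 ⊗ₖ C₂))).trace).re :=
        (hρ.ptraceY_reindex_piProd_mul_one_kronecker hC₂).re_trace_mul_le hv₁
    _ = v₁ * ((ptraceX ρ' * C₂).trace).re := by rw [trace_ptraceY, trace_mul_one_kronecker]
    _ ≤ v₁ * v₂ := mul_le_mul_of_nonneg_left (hv₂ ⟨_, hτ, hτtr, rfl⟩) hv₁0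

theorem sepQMA_perfect_parallel_repetition_general {m : ℕ} {ι κ : Fin m → Type}
    [∀ j, Fintype (ι j)] [∀ j, Fintype (κ j)]
    (C₁ : Matrix (∀ j, ι j) (∀ j, ι j) ℂ) (C₂ : Matrix (∀ j, κ j) (∀ j, κ j) ℂ)
    (hC₂sep : IsFullySep C₂)
    (hC₁ : C₁.PosSemidef)
    (v₁ v₂ : ℝ)
    (hv₁ : IsGreatest {x : ℝ | ∃ ρ : Matrix (∀ j, ι j) (∀ j, ι j) ℂ,
      IsFullySep ρ ∧ ρ.trace = 1 ∧ x = ((ρ * C₁).trace).re} v₁)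
    (hv₂ : IsGreatest {x : ℝ | ∃ ρ : Matrix (∀ j, κ j) (∀ j, κ j) ℂ,
      IsFullySep ρ ∧ ρ.trace = 1 ∧ x = ((ρ * C₂).trace).re} v₂) :
    IsGreatest {x : ℝ | ∃ ρ : Matrix (∀ j, ι j × κ j) (∀ j, ι j × κ j) ℂ,
      IsFullySep ρ ∧ ρ.trace = 1 ∧
      x = ((ρ * Matrix.reindex (piProd ι κ).symm (piProd ι κ).symm (C₁ ⊗ₖ C₂)).trace).re}
      (v₁ * v₂) := by
  obtain ⟨ρ₁, hρ₁, hρ₁tr, rfl⟩ := hv₁.1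
  obtain ⟨ρ₂, hρ₂, hρ₂tr, rfl⟩ := hv₂.1
  have hval₁ := Complex.nonneg_iff.mp (hρ₁.posSemidef.trace_mul_nonneg hC₁)
  refine ⟨⟨_, hρ₁.reindex_piProd_symm_kronecker hρ₂, ?_, ?_⟩, ?_⟩
  · rw [trace_reindex, trace_kronecker, hρ₁tr, hρ₂tr, one_mul]
  · rw [trace_reindex_mul_reindex, ← mul_kronecker_mul, trace_kronecker, Complex.mul_re,
      ← hval₁.2, zero_mul, sub_zero]
  · rintro _ ⟨ρ, hρ, hρtr, rfl⟩
    exact re_trace_mul_reindex_kronecker_le hρ hρtr hC₂sep hv₁.2 hval₁.1 hv₂.2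

/-- Perfect parallel repetition for `SepQMA`: if `C₁ ∈ Sep(X₁,…,X_m)` and
`C₂ ∈ Sep(Y₁,…,Y_m)` with `0 ⪯ Cᵢ ⪯ 1`, and `v₁, v₂` are the optimal values of the two
separable cone programs, then the optimal value for `C₁ ⊗ C₂` over
`Sep(X₁⊗Y₁,…,X_m⊗Y_m)` equals `v₁ · v₂`. -/
theorem sepQMA_perfect_parallel_repetition {m : ℕ} {ι κ : Fin m → Type}
    [∀ j, Fintype (ι j)] [∀ j, Fintype (κ j)]
    [∀ j, DecidableEq (ι j)] [∀ j, DecidableEq (κ j)]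
    (C₁ : Matrix (∀ j, ι j) (∀ j, ι j) ℂ) (C₂ : Matrix (∀ j, κ j) (∀ j, κ j) ℂ)
    (hC₁sep : IsFullySep C₁) (hC₂sep : IsFullySep C₂)
    (hC₁ : C₁.PosSemidef) (hC₂ : C₂.PosSemidef)
    (hC₁le : ((1 : Matrix (∀ j, ι j) (∀ j, ι j) ℂ) - C₁).PosSemidef)
    (hC₂le : ((1 : Matrix (∀ j, κ j) (∀ j, κ j) ℂ) - C₂).PosSemidef)
    (v₁ v₂ : ℝ)
    (hv₁ : IsGreatest {x : ℝ | ∃ ρ : Matrix (∀ j, ι j) (∀ j, ι j) ℂ,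
      IsFullySep ρ ∧ ρ.trace = 1 ∧ x = ((ρ * C₁).trace).re} v₁)
    (hv₂ : IsGreatest {x : ℝ | ∃ ρ : Matrix (∀ j, κ j) (∀ j, κ j) ℂ,
      IsFullySep ρ ∧ ρ.trace = 1 ∧ x = ((ρ * C₂).trace).re} v₂) :
    IsGreatest {x : ℝ | ∃ ρ : Matrix (∀ j, ι j × κ j) (∀ j, ι j × κ j) ℂ,
      IsFullySep ρ ∧ ρ.trace = 1 ∧
      x = ((ρ * Matrix.reindex (piProd ι κ).symm (piProd ι κ).symm (C₁ ⊗ₖ C₂)).trace).re}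
      (v₁ * v₂) :=
  sepQMA_perfect_parallel_repetition_general C₁ C₂ hC₂sep hC₁ v₁ v₂ hv₁ hv₂
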